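/- Let K be a scattering kernel. For ψ ∈ L^∞(S²), there exists φ ∈ L^∞(S²) with φ − H[φ] = ψ almost everywhere if and only if ∫_{S²} ψ(n) dn = 0. That is, the range of the operator Id − H on L^∞(S²) equals the set of bounded functions with zero mean over S². -/

import Mathlib

open MeasureTheory Metric

noncomputable section

/-- The ambient Euclidean space `ℝ³`. -/
abbrev E3 : Type := EuclideanSpace ℝ (Fin 3)

/-- The unit sphere `S² ⊂ ℝ³`. -/
abbrev S2 : Type := Metric.sphere (0 : E3) 1

/-- The surface measure on the unit sphere `S²` (with total mass `4π`). -/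
def μS : Measure S2 := (volume : Measure E3).toSphere

/-- A rotation of `ℝ³`: an orthogonal (i.e. norm preserving linear) transformation with
determinant `1`, i.e. an element of `SO(3)`. -/
def IsRotation (R : E3 ≃ₗᵢ[ℝ] E3) : Prop :=
  LinearMap.det (R.toLinearEquiv : E3 →ₗ[ℝ] E3) = 1

/-- The action of an orthogonal transformation on the unit sphere. -/
def rotate (R : E3 ≃ₗᵢ[ℝ] E3) (n : S2) : S2 :=
  ⟨R n, by
    have hn : ‖(n : E3)‖ = 1 := mem_sphere_zero_iff_norm.mp n.2
    simp [mem_sphere_zero_iff_norm, hn]⟩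

/-- A scattering kernel: a continuous, non-negative, rotation invariant function
`K : S² × S² → ℝ` with `∫_{S²} K(n,n') dn = 1` for every `n'`. -/
structure IsScatteringKernel (K : S2 → S2 → ℝ) : Prop where
  continuous : Continuous (Function.uncurry K)
  nonneg : ∀ n n' : S2, 0 ≤ K n n'
  normalized : ∀ n' : S2, ∫ n : S2, K n n' ∂μS = 1
  rotation_invariant : ∀ R : E3 ≃ₗᵢ[ℝ] E3, IsRotation R →
    ∀ n n' : S2, K (rotate R n) (rotate R n') = K n n'

/-!
Rotation invariance makes `K` symmetric (a half-turn exchanges any two points of `S²`), so `H` is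
a positive operator with `H 1 = 1` that preserves means; necessity follows by Fubini.
Conversely, `Hψ` is continuous, and since `S²` is compact and connected some iterated kernel is
bounded below by a constant `ε > 0` (Doeblin's condition). A power `H^M` therefore contracts the
sup norm of mean-zero continuous functions by `1 - ε |S²| < 1`, a Neumann series gives
`h ∈ C(S²)` with `h - H h = Hψ`, and `φ = ψ + h` solves `φ - Hφ = ψ`.
-/

open Function Topology Set

lemma Continuous.integrable_of_compactSpace {X : Type*} [TopologicalSpace X] [CompactSpace X]
    [MeasurableSpace X] [OpensMeasurableSpace X] {μ : Measure X} [IsFiniteMeasure μ] {f : X → ℝ}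
    (hf : Continuous f) : Integrable f μ :=
  hf.integrable_of_hasCompactSupport (.of_compactSpace _)

theorem ContinuousLinearMap.exists_sub_apply_eq_of_norm_pow_apply_le {𝕜 E : Type*}
    [NontriviallyNormedField 𝕜] [NormedAddCommGroup E] [NormedSpace 𝕜 E] [CompleteSpace E]
    (T : E →L[𝕜] E) {V : Set E} (hV : MapsTo T V V) {M : ℕ} {ρ : ℝ} (hρ0 : 0 ≤ ρ) (hρ1 : ρ < 1)
    (hTM : ∀ v ∈ V, ‖(T ^ M) v‖ ≤ ρ * ‖v‖) {w : E} (hw : w ∈ V) : ∃ h, h - T h = w := by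
  set P := T ^ M
  have hPV : MapsTo P V V := fun v hv => by simpa [P, pow_apply_eq_iterate] using hV.iterate M hv
  have hdecay : ∀ j, ‖(P ^ j) w‖ ≤ ρ ^ j * ‖w‖ ∧ (P ^ j) w ∈ V := by
    intro j
    induction j with
    | zero => simpa using hw
    | succ j ih =>
      rw [pow_succ', mul_apply_eq_comp]
      refine ⟨(hTM _ ih.2).trans ?_, hPV ih.2⟩
      rw [pow_succ', mul_assoc]
      exact mul_le_mul_of_nonneg_left ih.1 hρ0
  have hsum : Summable fun j => (P ^ j) w :=
    .of_norm_bounded ((summable_geometric_of_lt_one hρ0 hρ1).mul_right ‖w‖) fun j => (hdecay j).1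
  set g := ∑' j, (P ^ j) w
  -- `g` solves `g - P g = w`; the telescoping `(1 - T) * ∑_{i < M} T ^ i = 1 - P` finishes
  have hPg : P g = g - w := by
    simp_rw [g, P.map_tsum hsum, ← mul_apply_eq_comp, ← pow_succ',
      hsum.tsum_eq_zero_add, pow_zero, one_apply_eq_self, add_sub_cancel_left]
  refine ⟨(∑ i ∈ Finset.range M, T ^ i) g, ?_⟩
  have htelescope := congr($(mul_neg_geom_sum T M) g)
  simp only [mul_apply_eq_comp, sub_apply, one_apply_eq_self] at htelescope
  rw [htelescope, hPg, sub_sub_cancel]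

theorem LinearMap.norm_apply_le_of_minorization {X : Type*} [TopologicalSpace X]
    [CompactSpace X] [Nonempty X] [MeasurableSpace X] [OpensMeasurableSpace X] {μ : Measure X}
    [IsFiniteMeasure μ] {P : C(X, ℝ) →ₗ[ℝ] C(X, ℝ)} (hP1 : P 1 = 1) {ε : ℝ}
    (hP : ∀ f, 0 ≤ f → ∀ x, ε * ∫ y, f y ∂μ ≤ P f x) {f : C(X, ℝ)} (hf : ∫ x, f x ∂μ = 0) :
    ‖P f‖ ≤ (1 - ε * μ.real univ) * ‖f‖ := by
  -- apply the minorization to the nonnegative functions `‖f‖ ∓ f`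
  have key : ∀ g : C(X, ℝ), ‖g‖ ≤ ‖f‖ → ∫ x, g x ∂μ = 0 → ∀ x,
      ε * (μ.real univ * ‖f‖) ≤ ‖f‖ - P g x := by
    intro g hg hg0 x
    have hnonneg : 0 ≤ ‖f‖ • (1 : C(X, ℝ)) - g := fun y => by
      simpa using (le_abs_self (g y)).trans ((g.norm_coe_le_norm y).trans hg)
    simpa [integral_sub (integrable_const _) g.continuous.integrable_of_compactSpace, hg0, hP1]
      using hP _ hnonneg x
  refine (ContinuousMap.norm_le_of_nonempty _).2 fun x => ?_
  have hneg := key (-f) (norm_neg f).le (by simp [integral_neg, hf]) x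
  rw [map_neg, ContinuousMap.neg_apply] at hneg
  rw [Real.norm_eq_abs, abs_le]
  constructor <;> nlinarith [key f le_rfl hf x]

section IntegralOperator

variable {X : Type*} [MetricSpace X] [CompactSpace X] [MeasurableSpace X] [BorelSpace X]
  {μ : Measure X} {K : X → X → ℝ}

def integralOperator (μ : Measure X) (K : X → X → ℝ) (φ : X → ℝ) (x : X) : ℝ :=
  ∫ y, K x y * φ y ∂μ

lemma integrable_kernel_mul (hK : Continuous (uncurry K)) {φ : X → ℝ} (hφ : Integrable φ μ)
    (x : X) : Integrable (fun y => K x y * φ y) μ := by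
  obtain ⟨C, hC⟩ := hK.bounded_above_of_compact_support (.of_compactSpace _)
  exact hφ.bdd_mul (hK.comp (.prodMk_right x)).aestronglyMeasurable
    (ae_of_all _ fun y => hC (x, y))

lemma integralOperator_add (hK : Continuous (uncurry K)) {φ φ' : X → ℝ} (hφ : Integrable φ μ)
    (hφ' : Integrable φ' μ) :
    integralOperator μ K (φ + φ') = integralOperator μ K φ + integralOperator μ K φ' := by
  ext x
  simp only [integralOperator, Pi.add_apply, mul_add]
  exact integral_add (integrable_kernel_mul hK hφ x) (integrable_kernel_mul hK hφ' x)

lemma continuous_integralOperator (hK : Continuous (uncurry K)) {φ : X → ℝ}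
    (hφ : Integrable φ μ) : Continuous (integralOperator μ K φ) := by
  obtain ⟨C, hC⟩ := hK.bounded_above_of_compact_support (.of_compactSpace _)
  refine continuous_of_dominated (bound := fun y => C * ‖φ y‖)
    (fun x => (integrable_kernel_mul hK hφ x).aestronglyMeasurable)
    (fun x => ae_of_all _ fun y => ?_) (hφ.norm.const_mul C)
    (ae_of_all _ fun y => (hK.comp (.prodMk_left y)).mul continuous_const)
  rw [norm_mul]
  exact mul_le_mul_of_nonneg_right (hC (x, y)) (norm_nonneg _)

variable [IsFiniteMeasure μ]

lemma integrable_integralOperator (hK : Continuous (uncurry K)) {φ : X → ℝ}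
    (hφ : Integrable φ μ) : Integrable (integralOperator μ K φ) μ :=
  (continuous_integralOperator hK hφ).integrable_of_compactSpace

lemma integral_integral_mul_swap {A : X → X → ℝ} (hA : Continuous (uncurry A)) {φ : X → ℝ}
    (hφ : Integrable φ μ) :
    ∫ x, ∫ y, A x y * φ y ∂μ ∂μ = ∫ y, (∫ x, A x y ∂μ) * φ y ∂μ := by
  obtain ⟨C, hC⟩ := hA.bounded_above_of_compact_support (.of_compactSpace _)
  have hint : Integrable (uncurry fun x y => A x y * φ y) (μ.prod μ) :=
    (hφ.comp_snd μ).bdd_mul hA.aestronglyMeasurable (ae_of_all _ hC)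
  simp_rw [integral_integral_swap hint, integral_mul_const]

lemma integral_integralOperator (hK : Continuous (uncurry K)) (hK1 : ∀ y, ∫ x, K x y ∂μ = 1)
    {φ : X → ℝ} (hφ : Integrable φ μ) : ∫ x, integralOperator μ K φ x ∂μ = ∫ x, φ x ∂μ := by
  simp only [integralOperator, integral_integral_mul_swap hK hφ, hK1, one_mul]


variable (μ) in
def integralCLM (hK : Continuous (uncurry K)) : C(X, ℝ) →L[ℝ] C(X, ℝ) :=
  LinearMap.mkContinuous
    { toFun f := ⟨integralOperator μ K f,
        continuous_integralOperator hK f.continuous.integrable_of_compactSpace⟩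
      map_add' f g := ContinuousMap.ext <| congrFun <| integralOperator_add hK
        f.continuous.integrable_of_compactSpace g.continuous.integrable_of_compactSpace
      map_smul' c f := ContinuousMap.ext fun x => by
        simp only [integralOperator, ContinuousMap.coe_mk, ContinuousMap.coe_smul, Pi.smul_apply,
          smul_eq_mul, mul_left_comm _ c, integral_const_mul, RingHom.id_apply] }
    (‖(⟨uncurry K, hK⟩ : C(X × X, ℝ))‖ * μ.real univ) fun f =>
      (ContinuousMap.norm_le _ (by positivity)).2 fun x => by
        refine (norm_integral_le_of_norm_le_const (ae_of_all _ fun y => ?_)).trans_eq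
          (mul_right_comm _ _ _)
        rw [norm_mul]
        exact mul_le_mul ((⟨uncurry K, hK⟩ : C(X × X, ℝ)).norm_coe_le_norm (x, y))
          (f.norm_coe_le_norm y) (norm_nonneg _) (norm_nonneg _)

@[simp]
lemma coe_integralCLM (hK : Continuous (uncurry K)) (f : C(X, ℝ)) :
    ⇑(integralCLM μ hK f) = integralOperator μ K f :=
  rfl

end IntegralOperator

structure IsSymmetricMarkovKernel {X : Type*} [TopologicalSpace X] [MeasurableSpace X]
    (μ : Measure X) (K : X → X → ℝ) : Prop where
  continuous : Continuous (uncurry K)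
  nonneg : ∀ x y, 0 ≤ K x y
  symm : ∀ x y, K x y = K y x
  integral_eq_one : ∀ x, ∫ y, K x y ∂μ = 1

namespace IsSymmetricMarkovKernel

variable {X : Type*} [MetricSpace X] [MeasurableSpace X] {μ : Measure X} {K : X → X → ℝ}

def column (hK : IsSymmetricMarkovKernel μ K) : C(X, C(X, ℝ)) :=
  ContinuousMap.curry ⟨fun p => K p.2 p.1, hK.continuous.comp continuous_swap⟩

@[simp]
lemma column_apply (hK : IsSymmetricMarkovKernel μ K) (x y : X) : hK.column y x = K x y :=
  rfl

lemma column_nonneg (hK : IsSymmetricMarkovKernel μ K) (y : X) : 0 ≤ hK.column y :=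
  fun x => hK.nonneg x y

lemma exists_pos (hK : IsSymmetricMarkovKernel μ K) (x : X) : ∃ y, 0 < K x y := by
  by_contra! h
  have h0 : (fun y => K x y) = 0 := funext fun y => (h y).antisymm (hK.nonneg x y)
  simpa [h0] using hK.integral_eq_one x

variable [CompactSpace X] [BorelSpace X] [IsFiniteMeasure μ]

abbrev op (hK : IsSymmetricMarkovKernel μ K) : C(X, ℝ) →L[ℝ] C(X, ℝ) :=
  integralCLM μ hK.continuous

lemma op_one (hK : IsSymmetricMarkovKernel μ K) : hK.op 1 = 1 := by
  ext x
  simp [integralOperator, hK.integral_eq_one]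

lemma op_nonneg (hK : IsSymmetricMarkovKernel μ K) {f : C(X, ℝ)} (hf : 0 ≤ f) : 0 ≤ hK.op f :=
  fun x => integral_nonneg fun y => mul_nonneg (hK.nonneg x y) (hf y)

lemma pow_op_nonneg (hK : IsSymmetricMarkovKernel μ K) (m : ℕ) {f : C(X, ℝ)} (hf : 0 ≤ f) :
    0 ≤ (hK.op ^ m) f := by
  induction m with
  | zero => simpa using hf
  | succ m ih => rw [pow_succ', mul_apply_eq_comp]; exact hK.op_nonneg ih

lemma integral_op (hK : IsSymmetricMarkovKernel μ K) (f : C(X, ℝ)) :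
    ∫ x, hK.op f x ∂μ = ∫ x, f x ∂μ :=
  integral_integralOperator hK.continuous
    (fun y => by simpa only [hK.symm _ y] using hK.integral_eq_one y)
    f.continuous.integrable_of_compactSpace

lemma continuous_pow_op_column (hK : IsSymmetricMarkovKernel μ K) (m : ℕ) :
    Continuous fun p : X × X => (hK.op ^ m) (hK.column p.2) p.1 :=
  continuous_eval.comp
    ((((hK.op ^ m).continuous.comp hK.column.continuous).comp continuous_snd).prodMk
      continuous_fst)

lemma pow_succ_op_apply (hK : IsSymmetricMarkovKernel μ K) (m : ℕ) (f : C(X, ℝ)) (x : X) :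
    (hK.op ^ (m + 1)) f x = ∫ y, (hK.op ^ m) (hK.column y) x * f y ∂μ := by
  induction m generalizing f with
  | zero => rfl
  | succ m ih =>
    have hA : Continuous (uncurry fun q p => (hK.op ^ m) (hK.column q) x * K q p) :=
      ((hK.continuous_pow_op_column m).comp (continuous_const.prodMk continuous_fst)).mul
        hK.continuous
    calc (hK.op ^ (m + 1 + 1)) f x = (hK.op ^ (m + 1)) (hK.op f) x := by
          rw [pow_succ, mul_apply_eq_comp]
      _ = ∫ q, ∫ p, (hK.op ^ m) (hK.column q) x * K q p * f p ∂μ ∂μ := by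
          rw [ih]
          simp_rw [mul_assoc, integral_const_mul]
          rfl
      _ = ∫ p, (∫ q, (hK.op ^ m) (hK.column q) x * K q p ∂μ) * f p ∂μ :=
          integral_integral_mul_swap hA f.continuous.integrable_of_compactSpace
      _ = ∫ p, (hK.op ^ (m + 1)) (hK.column p) x * f p ∂μ := by
          simp_rw [ih]
          rfl

lemma pow_op_column_pos_succ (hK : IsSymmetricMarkovKernel μ K) {m : ℕ} {x x' y : X}
    (hx' : ∀ g : C(X, ℝ), 0 ≤ g → 0 < g x' → 0 < (hK.op ^ 2) g x)
    (hm : 0 < (hK.op ^ (2 * m + 1)) (hK.column y) x') :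
    0 < (hK.op ^ (2 * (m + 1) + 1)) (hK.column y) x := by
  rw [show 2 * (m + 1) + 1 = 2 + (2 * m + 1) by ring, pow_add, mul_apply_eq_comp]
  exact hx' _ (hK.pow_op_nonneg _ (hK.column_nonneg y)) hm

variable [μ.IsOpenPosMeasure]

lemma op_pos (hK : IsSymmetricMarkovKernel μ K) {g : C(X, ℝ)} (hg : 0 ≤ g) {x y : X}
    (hxy : 0 < K x y) (hy : 0 < g y) : 0 < hK.op g x :=
  integral_pos_of_integrable_nonneg_nonzero
    ((hK.continuous.comp (.prodMk_right x)).mul g.continuous)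
    (integrable_kernel_mul hK.continuous g.continuous.integrable_of_compactSpace x)
    (fun y => mul_nonneg (hK.nonneg x y) (hg y)) (mul_pos hxy hy).ne'

lemma eventually_sq_op_pos (hK : IsSymmetricMarkovKernel μ K) (x : X) :
    ∀ᶠ x' in 𝓝 x, ∀ g : C(X, ℝ), 0 ≤ g → 0 < g x' → 0 < (hK.op ^ 2) g x := by
  -- a two-step path `x → p → x'` exists for `x'` near `x`, since `K p x = K x p > 0`
  obtain ⟨p, hp⟩ := hK.exists_pos x
  have hU : IsOpen {x' | 0 < K p x'} :=
    isOpen_lt continuous_const (hK.continuous.comp (.prodMk_right p))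
  filter_upwards [hU.mem_nhds (show 0 < K p x by rwa [hK.symm])] with x' hx' g hg hgx'
  rw [sq, mul_apply_eq_comp]
  exact hK.op_pos (hK.op_nonneg hg) hp (hK.op_pos hg hx' hgx')

variable [ConnectedSpace X]

lemma exists_pow_op_column_pos (hK : IsSymmetricMarkovKernel μ K) (x y : X) :
    ∃ m, 0 < (hK.op ^ (2 * m + 1)) (hK.column y) x := by
  -- `(hK.op ^ k) (hK.column y) x` is the density of `k + 1` steps from `x` to `y`. `K y y` may
  -- vanish, but `y → p → y` has positive density, so the set reaching `y` in an even number of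
  -- steps contains `y`; it is clopen.
  set W := ⋃ m, {x | 0 < (hK.op ^ (2 * m + 1)) (hK.column y) x}
  have hW_open : IsOpen W := isOpen_iUnion fun m => isOpen_lt continuous_const (map_continuous _)
  have hW_closed : IsClosed W := isClosed_of_closure_subset fun x hx => by
    obtain ⟨x', hx', hx'W⟩ :=
      ((hK.eventually_sq_op_pos x).and_frequently (mem_closure_iff_frequently.1 hx)).exists
    obtain ⟨m, hm⟩ := mem_iUnion.1 hx'W
    exact mem_iUnion.2 ⟨m + 1, hK.pow_op_column_pos_succ hx' hm⟩
  have hyW : y ∈ W := by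
    obtain ⟨p, hp⟩ := hK.exists_pos y
    exact mem_iUnion.2 ⟨0, hK.op_pos (hK.column_nonneg y) hp (by rwa [column_apply, hK.symm])⟩
  exact mem_iUnion.1 (eq_univ_iff_forall.1 (IsClopen.eq_univ ⟨hW_closed, hW_open⟩ ⟨y, hyW⟩) x)

/-- Doeblin's condition. -/
lemma exists_le_pow_op_column (hK : IsSymmetricMarkovKernel μ K) :
    ∃ M ε, 0 < ε ∧ ∀ x y, ε ≤ (hK.op ^ M) (hK.column y) x := by
  set O : ℕ → Set (X × X) := fun m => {p | 0 < (hK.op ^ (2 * m + 1)) (hK.column p.2) p.1}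
  have hO_mono : Monotone O := monotone_nat_of_le_succ fun m p hp =>
    hK.pow_op_column_pos_succ ((hK.eventually_sq_op_pos p.1).self_of_nhds) hp
  obtain ⟨m, hm⟩ := isCompact_univ.elim_directed_cover O
    (fun m => isOpen_lt continuous_const (hK.continuous_pow_op_column _))
    (fun p _ => mem_iUnion.2 (hK.exists_pow_op_column_pos p.1 p.2)) hO_mono.directed_le
  obtain ⟨p₀, -, hp₀⟩ := isCompact_univ.exists_isMinOn univ_nonempty
    (hK.continuous_pow_op_column (2 * m + 1)).continuousOn
  exact ⟨2 * m + 1, _, hm (mem_univ p₀), fun x y => hp₀ (mem_univ (x, y))⟩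

lemma exists_le_pow_op_apply (hK : IsSymmetricMarkovKernel μ K) :
    ∃ M ε, 0 < ε ∧ ∀ f : C(X, ℝ), 0 ≤ f → ∀ x, ε * ∫ y, f y ∂μ ≤ (hK.op ^ M) f x := by
  obtain ⟨M, ε, hε, hle⟩ := hK.exists_le_pow_op_column
  refine ⟨M + 1, ε, hε, fun f hf x => ?_⟩
  rw [hK.pow_succ_op_apply, ← integral_const_mul]
  refine integral_mono (f.continuous.integrable_of_compactSpace.const_mul ε) ?_
    fun y => mul_le_mul_of_nonneg_right (hle x y) (hf y)
  exact (((hK.continuous_pow_op_column M).comp (continuous_const.prodMk continuous_id)).mul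
    f.continuous).integrable_of_compactSpace

theorem exists_sub_op_eq (hK : IsSymmetricMarkovKernel μ K) {w : C(X, ℝ)}
    (hw : ∫ x, w x ∂μ = 0) : ∃ h, h - hK.op h = w := by
  obtain ⟨M, ε, hε, hmin⟩ := hK.exists_le_pow_op_apply
  have hM1 : (hK.op ^ M) 1 = 1 := by rw [pow_apply_eq_iterate]; exact iterate_fixed hK.op_one M
  have hμ : 0 < μ.real univ :=
    ENNReal.toReal_pos (isOpen_univ.measure_pos μ univ_nonempty).ne' (measure_ne_top μ univ)
  have hρ0 : 0 ≤ 1 - ε * μ.real univ := by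
    simpa [hM1] using hmin 1 zero_le_one (Classical.arbitrary X)
  exact hK.op.exists_sub_apply_eq_of_norm_pow_apply_le (V := {f | ∫ x, f x ∂μ = 0})
    (fun f hf => (hK.integral_op f).trans hf) hρ0 (by nlinarith)
    (fun v hv => LinearMap.norm_apply_le_of_minorization (P := (hK.op ^ M).toLinearMap)
      hM1 hmin hv) hw

end IsSymmetricMarkovKernel

section Reflections

variable {E : Type*} [NormedAddCommGroup E] [InnerProductSpace ℝ E] [FiniteDimensional ℝ E]

lemma det_reflection_orthogonal_singleton {v : E} (hv : v ≠ 0) :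
    LinearMap.det ((ℝ ∙ v)ᗮ.reflection.toLinearEquiv : E →ₗ[ℝ] E) = -1 := by
  rw [Submodule.det_reflection, Submodule.orthogonal_orthogonal, finrank_span_singleton hv,
    pow_one]

lemma exists_ne_zero_inner_eq_zero (hE : 2 < Module.finrank ℝ E) (u v : E) :
    ∃ w ≠ 0, inner ℝ u w = 0 ∧ inner ℝ v w = 0 := by
  classical
  set S := Submodule.span ℝ {u, v}
  have hS : Module.finrank ℝ S ≤ 2 :=
    (finrank_span_le_card ({u, v} : Set E)).trans (by simpa using Finset.card_le_two)
  have hS' : Sᗮ ≠ ⊥ := fun h => by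
    have := S.finrank_add_finrank_orthogonal
    rw [h, finrank_bot] at this
    omega
  obtain ⟨w, hw, hw0⟩ := Submodule.exists_mem_ne_zero_of_ne_bot hS'
  exact ⟨w, hw0, hw u (Submodule.subset_span (by simp)), hw v (Submodule.subset_span (by simp))⟩

end Reflections

lemma finrank_E3 : Module.finrank ℝ E3 = 3 := finrank_euclideanSpace_fin

/-- For `n ≠ n'`: the reflection exchanging `n` and `n'` followed by a reflection fixing both,
i.e. the half-turn about `n + n'`. -/
lemma exists_isRotation_swap (n n' : S2) :
    ∃ R, IsRotation R ∧ rotate R n = n' ∧ rotate R n' = n := by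
  by_cases h : n = n'
  · exact ⟨.refl ℝ E3, LinearMap.det_id, h, h.symm⟩
  obtain ⟨w, hw0, hnw, hn'w⟩ := exists_ne_zero_inner_eq_zero (by rw [finrank_E3]; norm_num)
    (n : E3) n'
  have hd : (n : E3) - n' ≠ 0 := sub_ne_zero.2 (Subtype.coe_ne_coe.2 h)
  set S := (ℝ ∙ ((n : E3) - n'))ᗮ.reflection
  set S' := (ℝ ∙ w)ᗮ.reflection
  have hnorm : ‖(n : E3)‖ = ‖(n' : E3)‖ := by simp
  have hSn : S n = n' := Submodule.reflection_sub hnorm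
  have hSn' : S n' = n := by rw [← hSn, Submodule.reflection_reflection]
  have hS'fix : ∀ x : E3, inner ℝ x w = 0 → S' x = x := fun x hx =>
    Submodule.reflection_mem_subspace_eq_self
      (Submodule.mem_orthogonal_singleton_iff_inner_right.2 (by rwa [real_inner_comm]))
  refine ⟨S.trans S', ?_, Subtype.ext ?_, Subtype.ext ?_⟩
  · change LinearMap.det
      ((S'.toLinearEquiv : E3 →ₗ[ℝ] E3) ∘ₗ (S.toLinearEquiv : E3 →ₗ[ℝ] E3)) = 1
    rw [LinearMap.det_comp, det_reflection_orthogonal_singleton hw0,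
      det_reflection_orthogonal_singleton hd]
    norm_num
  · change S' (S n) = n'
    rw [hSn, hS'fix _ hn'w]
  · change S' (S n') = n
    rw [hSn', hS'fix _ hnw]

lemma IsScatteringKernel.symm {K : S2 → S2 → ℝ} (hK : IsScatteringKernel K) (n n' : S2) :
    K n n' = K n' n := by
  obtain ⟨R, hR, hn, hn'⟩ := exists_isRotation_swap n n'
  simpa only [hn, hn'] using hK.rotation_invariant R hR n' n

lemma IsScatteringKernel.isSymmetricMarkovKernel {K : S2 → S2 → ℝ} (hK : IsScatteringKernel K) :
    IsSymmetricMarkovKernel μS K where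
  continuous := hK.continuous
  nonneg := hK.nonneg
  symm := hK.symm
  integral_eq_one n := by simpa only [hK.symm n] using hK.normalized n

instance : ConnectedSpace S2 :=
  have : PreconnectedSpace S2 := Subtype.preconnectedSpace <|
    isPreconnected_sphere (by rw [← Module.finrank_eq_rank, finrank_E3]; norm_num) 0 1
  { toNonempty := ⟨⟨EuclideanSpace.single 0 1, by simp⟩⟩ }

instance : IsFiniteMeasure μS := by unfold μS; infer_instance

instance : μS.IsOpenPosMeasure := by unfold μS; infer_instance

/-- The range of `Id − H` on `L^∞(S²)`, where `H` is the scattering operator of a scattering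
kernel `K`: for `ψ ∈ L^∞(S²)` there exists `φ ∈ L^∞(S²)` with `φ − H[φ] = ψ` almost
everywhere if and only if `∫_{S²} ψ(n) dn = 0`. -/
theorem range_id_sub_scattering (K : S2 → S2 → ℝ) (hK : IsScatteringKernel K)
    (ψ : S2 → ℝ) (hψ : MemLp ψ ⊤ μS) :
    (∃ φ : S2 → ℝ, MemLp φ ⊤ μS ∧
        (fun n => φ n - ∫ n' : S2, K n n' * φ n' ∂μS) =ᵐ[μS] ψ) ↔
      ∫ n : S2, ψ n ∂μS = 0 := by
  have hKc := hK.continuous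
  constructor
  · rintro ⟨φ, hφ, hφψ⟩
    have hφi := hφ.integrable le_top
    change (φ - integralOperator μS K φ) =ᵐ[μS] ψ at hφψ
    rw [← integral_congr_ae hφψ, Pi.sub_def,
      integral_sub hφi (integrable_integralOperator hKc hφi),
      integral_integralOperator hKc hK.normalized hφi, sub_self]
  · intro hψ0
    have hψi := hψ.integrable le_top
    let w : C(S2, ℝ) := ⟨integralOperator μS K ψ, continuous_integralOperator hKc hψi⟩
    obtain ⟨h, hh⟩ := hK.isSymmetricMarkovKernel.exists_sub_op_eq (w := w)
      ((integral_integralOperator hKc hK.normalized hψi).trans hψ0)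
    refine ⟨ψ + h, hψ.add (memLp_top_of_bound h.continuous.aestronglyMeasurable ‖h‖
      (ae_of_all _ h.norm_coe_le_norm)), ae_of_all _ fun n => ?_⟩
    have hn : h n - integralOperator μS K h n = integralOperator μS K ψ n := congr($hh n)
    change ψ n + h n - integralOperator μS K (ψ + h) n = ψ n
    rw [integralOperator_add hKc hψi h.continuous.integrable_of_compactSpace, Pi.add_apply]
    linarith
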